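/- arXiv:2605.24070 — 2 statements merged into one kernel-verified Lean document; each statement's English description precedes it below -/
import Mathlib

section
/- Let d ∈ ℕ, let K be a symmetric positive semidefinite real d×d matrix, let γ > 0, and let (z_s, w_s)_{s∈[0,h]} be a continuously differentiable solution of the linear ODE system z′_s = w_s, w′_s = −γ w_s − K z_s on [0, h]. Then the map r ↦ ‖w_r‖² is twice differentiable on [0, h] with second derivative (d²/dr²)‖w_r‖² = 4γ²‖w_r‖² + 6γ ⟪w_r, K z_r⟫ + 2‖K z_r‖² − 2⟪w_r, K w_r⟫, and this second derivative satisfies the two-sided bounds (d²/dr²)‖w_r‖² ≤ 7γ²‖w_r‖² + 5‖K z_r‖² − 2⟪w_r, K w_r⟫ and (d²/dr²)‖w_r‖² ≥ −(1/4)‖K z_r‖² − 2⟪w_r, K w_r⟫ for all r ∈ [0, h]. -/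
/-!
Along the flow, `(‖w‖²)' = 2⟪w, w'⟫ = -2γ‖w‖² - 2⟪w, Kz⟫`, and differentiating once more with
`(Kz)' = Kw` gives the stated formula. Both bounds are completions of squares:
`0 ≤ ‖γw - Kz‖²` for the upper one and `0 ≤ ‖2γw + (3/2)Kz‖²` for the lower one.
-/

open scoped InnerProductSpace

section DampedFlow

variable {E : Type*} [NormedAddCommGroup E] [InnerProductSpace ℝ E]

theorem hasDerivAt_norm_sq_of_hasDerivAt_damped {w : ℝ → E} {γ s : ℝ} {v : E}
    (hw : HasDerivAt w (-γ • w s - v) s) :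
    HasDerivAt (fun t => ‖w t‖ ^ 2) (-(2 * γ) * ‖w s‖ ^ 2 - 2 * ⟪w s, v⟫_ℝ) s := by
  refine hw.norm_sq.congr_deriv ?_
  rw [inner_sub_right, real_inner_smul_right, real_inner_self_eq_norm_sq]
  ring

theorem hasDerivAt_deriv_norm_sq_of_damped_flow (K : E →L[ℝ] E) {z w : ℝ → E} {γ s : ℝ}
    (hz : HasDerivAt z (w s) s) (hw : HasDerivAt w (-γ • w s - K (z s)) s) :
    HasDerivAt (fun t => -(2 * γ) * ‖w t‖ ^ 2 - 2 * ⟪w t, K (z t)⟫_ℝ)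
      (4 * γ ^ 2 * ‖w s‖ ^ 2 + 6 * γ * ⟪w s, K (z s)⟫_ℝ + 2 * ‖K (z s)‖ ^ 2
        - 2 * ⟪w s, K (w s)⟫_ℝ) s := by
  have hKz : HasDerivAt (fun t => K (z t)) (K (w s)) s := K.hasFDerivAt.comp_hasDerivAt s hz
  refine (((hasDerivAt_norm_sq_of_hasDerivAt_damped hw).const_mul (-(2 * γ))).sub
    ((hw.inner ℝ hKz).const_mul 2)).congr_deriv ?_
  rw [inner_sub_left, real_inner_smul_left, real_inner_self_eq_norm_sq]
  ring

theorem norm_sq_combination_le (γ : ℝ) (w v : E) :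
    4 * γ ^ 2 * ‖w‖ ^ 2 + 6 * γ * ⟪w, v⟫_ℝ + 2 * ‖v‖ ^ 2 ≤ 7 * γ ^ 2 * ‖w‖ ^ 2 + 5 * ‖v‖ ^ 2 := by
  have h := norm_sub_sq_real (γ • w) v
  rw [norm_smul, real_inner_smul_left, mul_pow, Real.norm_eq_abs, sq_abs] at h
  nlinarith [sq_nonneg ‖γ • w - v‖]

theorem neg_quarter_norm_sq_le_norm_sq_combination (γ : ℝ) (w v : E) :
    -(1 / 4) * ‖v‖ ^ 2 ≤ 4 * γ ^ 2 * ‖w‖ ^ 2 + 6 * γ * ⟪w, v⟫_ℝ + 2 * ‖v‖ ^ 2 := by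
  have h := norm_add_sq_real ((2 * γ) • w) ((3 / 2 : ℝ) • v)
  rw [norm_smul, norm_smul, real_inner_smul_left, real_inner_smul_right, mul_pow, mul_pow,
    Real.norm_eq_abs, Real.norm_eq_abs, sq_abs, sq_abs] at h
  nlinarith [sq_nonneg ‖(2 * γ) • w + (3 / 2 : ℝ) • v‖]

end DampedFlow
theorem second_derivative_speed_sq_general (d : ℕ)
    (K : EuclideanSpace ℝ (Fin d) →ₗ[ℝ] EuclideanSpace ℝ (Fin d))
    (γ h : ℝ)
    (z w : ℝ → EuclideanSpace ℝ (Fin d))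
    (hz : ∀ s ∈ Set.Icc (0 : ℝ) h, HasDerivAt z (w s) s)
    (hw : ∀ s ∈ Set.Icc (0 : ℝ) h, HasDerivAt w (-γ • w s - K (z s)) s) :
    ∃ f' : ℝ → ℝ,
      (∀ r ∈ Set.Icc (0 : ℝ) h,
        HasDerivWithinAt (fun s => ‖w s‖ ^ 2) (f' r) (Set.Icc (0 : ℝ) h) r) ∧
      (∀ r ∈ Set.Icc (0 : ℝ) h,
        HasDerivWithinAt f'
          (4 * γ ^ 2 * ‖w r‖ ^ 2 + 6 * γ * ⟪w r, K (z r)⟫_ℝ + 2 * ‖K (z r)‖ ^ 2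
            - 2 * ⟪w r, K (w r)⟫_ℝ) (Set.Icc (0 : ℝ) h) r) ∧
      (∀ r ∈ Set.Icc (0 : ℝ) h,
        4 * γ ^ 2 * ‖w r‖ ^ 2 + 6 * γ * ⟪w r, K (z r)⟫_ℝ + 2 * ‖K (z r)‖ ^ 2
            - 2 * ⟪w r, K (w r)⟫_ℝ ≤
          7 * γ ^ 2 * ‖w r‖ ^ 2 + 5 * ‖K (z r)‖ ^ 2 - 2 * ⟪w r, K (w r)⟫_ℝ) ∧
      (∀ r ∈ Set.Icc (0 : ℝ) h,
        -(1 / 4) * ‖K (z r)‖ ^ 2 - 2 * ⟪w r, K (w r)⟫_ℝ ≤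
          4 * γ ^ 2 * ‖w r‖ ^ 2 + 6 * γ * ⟪w r, K (z r)⟫_ℝ + 2 * ‖K (z r)‖ ^ 2
            - 2 * ⟪w r, K (w r)⟫_ℝ) := by
  refine ⟨fun r => -(2 * γ) * ‖w r‖ ^ 2 - 2 * ⟪w r, K (z r)⟫_ℝ,
    fun r hr => (hasDerivAt_norm_sq_of_hasDerivAt_damped (hw r hr)).hasDerivWithinAt,
    fun r hr => ?_, fun r _ => ?_, fun r _ => ?_⟩
  · exact (hasDerivAt_deriv_norm_sq_of_damped_flow K.toContinuousLinearMap (hz r hr)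
      (hw r hr)).hasDerivWithinAt
  · linarith [norm_sq_combination_le γ (w r) (K (z r))]
  · linarith [neg_quarter_norm_sq_le_norm_sq_combination γ (w r) (K (z r))]

/-- along the deterministic flow `z′ = w`, `w′ = −γw − Kz` on `[0,h]`,
the map `r ↦ ‖w_r‖²` is twice differentiable on `[0,h]` with second derivative
`4γ²‖w_r‖² + 6γ⟪w_r, Kz_r⟫ + 2‖Kz_r‖² − 2⟪w_r, Kw_r⟫`, and this second derivative is
bounded above by `7γ²‖w_r‖² + 5‖Kz_r‖² − 2⟪w_r, Kw_r⟫` and below by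
`−(1/4)‖Kz_r‖² − 2⟪w_r, Kw_r⟫`. -/
theorem second_derivative_speed_sq (d : ℕ)
    (K : EuclideanSpace ℝ (Fin d) →ₗ[ℝ] EuclideanSpace ℝ (Fin d))
    (hKsym : ∀ z w : EuclideanSpace ℝ (Fin d), ⟪K z, w⟫_ℝ = ⟪z, K w⟫_ℝ)
    (hKpsd : ∀ z : EuclideanSpace ℝ (Fin d), 0 ≤ ⟪z, K z⟫_ℝ)
    (γ h : ℝ) (hγ : 0 < γ)
    (z w : ℝ → EuclideanSpace ℝ (Fin d))
    (hz : ∀ s ∈ Set.Icc (0 : ℝ) h, HasDerivAt z (w s) s)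
    (hw : ∀ s ∈ Set.Icc (0 : ℝ) h, HasDerivAt w (-γ • w s - K (z s)) s) :
    ∃ f' : ℝ → ℝ,
      (∀ r ∈ Set.Icc (0 : ℝ) h,
        HasDerivWithinAt (fun s => ‖w s‖ ^ 2) (f' r) (Set.Icc (0 : ℝ) h) r) ∧
      (∀ r ∈ Set.Icc (0 : ℝ) h,
        HasDerivWithinAt f'
          (4 * γ ^ 2 * ‖w r‖ ^ 2 + 6 * γ * ⟪w r, K (z r)⟫_ℝ + 2 * ‖K (z r)‖ ^ 2
            - 2 * ⟪w r, K (w r)⟫_ℝ) (Set.Icc (0 : ℝ) h) r) ∧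
      (∀ r ∈ Set.Icc (0 : ℝ) h,
        4 * γ ^ 2 * ‖w r‖ ^ 2 + 6 * γ * ⟪w r, K (z r)⟫_ℝ + 2 * ‖K (z r)‖ ^ 2
            - 2 * ⟪w r, K (w r)⟫_ℝ ≤
          7 * γ ^ 2 * ‖w r‖ ^ 2 + 5 * ‖K (z r)‖ ^ 2 - 2 * ⟪w r, K (w r)⟫_ℝ) ∧
      (∀ r ∈ Set.Icc (0 : ℝ) h,
        -(1 / 4) * ‖K (z r)‖ ^ 2 - 2 * ⟪w r, K (w r)⟫_ℝ ≤
          4 * γ ^ 2 * ‖w r‖ ^ 2 + 6 * γ * ⟪w r, K (z r)⟫_ℝ + 2 * ‖K (z r)‖ ^ 2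
            - 2 * ⟪w r, K (w r)⟫_ℝ) :=
  second_derivative_speed_sq_general d K γ h z w hz hw
end

section
/- Let d ∈ ℕ, let K be a symmetric positive semidefinite real d×d matrix, let L_K > 0 satisfy ‖Kz‖ ≤ L_K‖z‖ for all z ∈ ℝ^d, let γ > 0, h > 0, and let (z_s, w_s)_{s∈[0,h]} be a continuously differentiable solution of the linear ODE system z′_s = w_s, w′_s = −γ w_s − K z_s on [0, h]. Then for every t ∈ [0, h] the trapezoidal defect satisfies ∫₀^t ((1/2)(‖w_t‖² + ‖w_0‖²) − ‖w_s‖²) ds ≤ (h²/2) ∫₀^t (7γ²‖w_r‖² + (11/2) L_K ⟪z_r, K z_r⟫ + 2 L_K ‖w_r‖²) dr. -/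
/-!
Along the flow the function `f(s) = ‖w_s‖²` is twice differentiable, with
`f'' = 4γ²‖w‖² + 6γ⟪w,Kz⟫ + 2‖Kz‖² - 2⟪w,Kw⟫`. Two integrations by parts give the Peano-kernel
form of the trapezoidal defect, `∫₀ᵗ ((f 0 + f t)/2 - f) = ∫₀ᵗ s(t-s)/2 · f''(s) ds`, and the kernel
is at most `t²/8`. It remains to bound `f''` pointwise: Young's inequality absorbs the cross term,
positivity of `K` drops `⟪w,Kw⟫`, and `‖Kz‖² ≤ L_K⟪z,Kz⟫` follows from the Cauchy–Schwarz
inequality for the positive semidefinite form `⟪·, K ·⟫`.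
-/

open scoped InnerProductSpace
open MeasureTheory Set intervalIntegral

theorem integral_trapezoid_defect_eq {f f' f'' : ℝ → ℝ} {a b : ℝ}
    (hf : ∀ x ∈ uIcc a b, HasDerivAt f (f' x) x)
    (hf' : ∀ x ∈ uIcc a b, HasDerivAt f' (f'' x) x)
    (hf'' : IntervalIntegrable f'' volume a b) :
    ∫ x in a..b, ((f a + f b) / 2 - f x) = ∫ x in a..b, (x - a) * (b - x) / 2 * f'' x := by
  have hfc : ContinuousOn f (uIcc a b) := fun x hx => (hf x hx).continuousAt.continuousWithinAt
  have hfc' : ContinuousOn f' (uIcc a b) := fun x hx => (hf' x hx).continuousAt.continuousWithinAt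
  have hkernel : ∀ x ∈ uIcc a b,
      HasDerivAt (fun x => (x - a) * (b - x) / 2) (-(x - (a + b) / 2)) x := fun x _ =>
    ((((hasDerivAt_id' x).sub_const a).mul ((hasDerivAt_id' x).const_sub b)).div_const
      2).congr_deriv (by ring)
  have hlin : ∀ x ∈ uIcc a b, HasDerivAt (fun x => x - (a + b) / 2) 1 x := fun x _ =>
    (hasDerivAt_id x).sub_const _
  rw [integral_mul_deriv_eq_deriv_mul hkernel hf'
    ((by fun_prop : Continuous fun x : ℝ => -(x - (a + b) / 2)).intervalIntegrable a b) hf'',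
    integral_sub intervalIntegrable_const hfc.intervalIntegrable, intervalIntegral.integral_const]
  simp only [neg_mul, intervalIntegral.integral_neg, sub_neg_eq_add]
  rw [integral_mul_deriv_eq_deriv_mul hlin hf intervalIntegrable_const hfc'.intervalIntegrable]
  simp only [one_mul, smul_eq_mul]
  ring

theorem integral_trapezoid_defect_le {f f' f'' g : ℝ → ℝ} {a b : ℝ} (hab : a ≤ b)
    (hf : ∀ x ∈ uIcc a b, HasDerivAt f (f' x) x)
    (hf' : ∀ x ∈ uIcc a b, HasDerivAt f' (f'' x) x)
    (hf'' : IntervalIntegrable f'' volume a b) (hg : IntervalIntegrable g volume a b)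
    (hle : ∀ x ∈ Icc a b, f'' x ≤ g x) (hg0 : ∀ x ∈ Icc a b, 0 ≤ g x) :
    ∫ x in a..b, ((f a + f b) / 2 - f x) ≤ (b - a) ^ 2 / 8 * ∫ x in a..b, g x := by
  rw [integral_trapezoid_defect_eq hf hf' hf'', ← intervalIntegral.integral_const_mul]
  refine integral_mono_on hab (hf''.continuousOn_mul (by fun_prop)) (hg.const_mul _)
    fun x hx => ?_
  have hkernel : (x - a) * (b - x) / 2 ≤ (b - a) ^ 2 / 8 := by nlinarith [sq_nonneg (2 * x - a - b)]
  calc (x - a) * (b - x) / 2 * f'' x ≤ (x - a) * (b - x) / 2 * g x := by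
        gcongr
        · nlinarith [hx.1, hx.2]
        · exact hle x hx
    _ ≤ (b - a) ^ 2 / 8 * g x := by gcongr; exact hg0 x hx

section

variable {E : Type*} [NormedAddCommGroup E] [InnerProductSpace ℝ E] {K : E →ₗ[ℝ] E}

theorem LinearMap.IsPositive.real_inner_map_sq_le (hK : K.IsPositive) (x y : E) :
    ⟪x, K y⟫_ℝ ^ 2 ≤ ⟪x, K x⟫_ℝ * ⟪y, K y⟫_ℝ := by
  have hsymm : ⟪y, K x⟫_ℝ = ⟪x, K y⟫_ℝ := by rw [real_inner_comm, hK.isSymmetric]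
  have hquad : ∀ c : ℝ, 0 ≤ ⟪y, K y⟫_ℝ * (c * c) + 2 * ⟪x, K y⟫_ℝ * c + ⟪x, K x⟫_ℝ := by
    intro c
    have hnonneg := hK.inner_nonneg_right (x + c • y)
    simp only [map_add, map_smul, inner_add_left, inner_add_right, real_inner_smul_left,
      real_inner_smul_right, hsymm] at hnonneg
    linarith
  have hdiscrim := discrim_le_zero hquad
  rw [discrim] at hdiscrim
  linarith

theorem LinearMap.IsPositive.norm_map_sq_le (hK : K.IsPositive) {L : ℝ}
    (hL : ∀ x, ‖K x‖ ≤ L * ‖x‖) (x : E) : ‖K x‖ ^ 2 ≤ L * ⟪x, K x⟫_ℝ := by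
  rcases (norm_nonneg (K x)).eq_or_lt with hKx | hKx
  · simp [norm_eq_zero.mp hKx.symm]
  have hnorm : ‖K x‖ ^ 2 = ⟪x, K (K x)⟫_ℝ := by
    rw [← hK.isSymmetric, real_inner_self_eq_norm_sq]
  have hKKx : ⟪K x, K (K x)⟫_ℝ ≤ L * ‖K x‖ ^ 2 :=
    calc ⟪K x, K (K x)⟫_ℝ ≤ ‖K x‖ * ‖K (K x)‖ := real_inner_le_norm _ _
      _ ≤ ‖K x‖ * (L * ‖K x‖) := by gcongr; exact hL _
      _ = L * ‖K x‖ ^ 2 := by ring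
  have hCS := hK.real_inner_map_sq_le x (K x)
  rw [← hnorm] at hCS
  refine le_of_mul_le_mul_right ?_ (pow_pos hKx 2)
  calc ‖K x‖ ^ 2 * ‖K x‖ ^ 2 ≤ ⟪x, K x⟫_ℝ * (L * ‖K x‖ ^ 2) := by
        nlinarith [mul_le_mul_of_nonneg_left hKKx (hK.inner_nonneg_right x)]
    _ = L * ⟪x, K x⟫_ℝ * ‖K x‖ ^ 2 := by ring

theorem LinearMap.IsPositive.second_deriv_norm_sq_velocity_le (hK : K.IsPositive) {L : ℝ}
    (hL0 : 0 ≤ L) (hL : ∀ x, ‖K x‖ ≤ L * ‖x‖) (γ : ℝ) (z w : E) :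
    4 * γ ^ 2 * ‖w‖ ^ 2 + 6 * γ * ⟪w, K z⟫_ℝ + 2 * ‖K z‖ ^ 2 - 2 * ⟪w, K w⟫_ℝ ≤
      7 * γ ^ 2 * ‖w‖ ^ 2 + (11 / 2) * L * ⟪z, K z⟫_ℝ + 2 * L * ‖w‖ ^ 2 := by
  have hcross : 0 ≤ ‖γ • w - K z‖ ^ 2 := sq_nonneg _
  rw [norm_sub_sq_real, norm_smul, real_inner_smul_left, mul_pow, Real.norm_eq_abs, sq_abs]
    at hcross
  nlinarith [hK.norm_map_sq_le hL z, hK.inner_nonneg_right w, hK.inner_nonneg_right z,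
    mul_nonneg hL0 (hK.inner_nonneg_right z), mul_nonneg hL0 (sq_nonneg ‖w‖)]

variable (K) (γ : ℝ) {z w : ℝ → E} {s : ℝ}

theorem hasDerivAt_norm_sq_velocity (hw : HasDerivAt w (-γ • w s - K (z s)) s) :
    HasDerivAt (fun s => ‖w s‖ ^ 2) (-2 * γ * ‖w s‖ ^ 2 - 2 * ⟪w s, K (z s)⟫_ℝ) s :=
  hw.norm_sq.congr_deriv <| by
    rw [inner_sub_right, real_inner_smul_right, real_inner_self_eq_norm_sq]; ring

theorem hasDerivAt_deriv_norm_sq_velocity [FiniteDimensional ℝ E] (hz : HasDerivAt z (w s) s)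
    (hw : HasDerivAt w (-γ • w s - K (z s)) s) :
    HasDerivAt (fun s => -2 * γ * ‖w s‖ ^ 2 - 2 * ⟪w s, K (z s)⟫_ℝ)
      (4 * γ ^ 2 * ‖w s‖ ^ 2 + 6 * γ * ⟪w s, K (z s)⟫_ℝ + 2 * ‖K (z s)‖ ^ 2
        - 2 * ⟪w s, K (w s)⟫_ℝ) s := by
  have hKz : HasDerivAt (fun s => K (z s)) (K (w s)) s :=
    K.toContinuousLinearMap.hasFDerivAt.comp_hasDerivAt s hz
  refine (((hasDerivAt_norm_sq_velocity K γ hw).const_mul (-2 * γ)).sub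
    ((hw.inner ℝ hKz).const_mul 2)).congr_deriv ?_
  rw [inner_sub_left, real_inner_smul_left, real_inner_self_eq_norm_sq]
  ring

end

theorem trapezoidal_defect_bound_general (d : ℕ)
    (K : EuclideanSpace ℝ (Fin d) →ₗ[ℝ] EuclideanSpace ℝ (Fin d))
    (hKsym : ∀ z w : EuclideanSpace ℝ (Fin d), ⟪K z, w⟫_ℝ = ⟪z, K w⟫_ℝ)
    (hKpsd : ∀ z : EuclideanSpace ℝ (Fin d), 0 ≤ ⟪z, K z⟫_ℝ)
    (L_K : ℝ) (hLK : 0 < L_K)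
    (hKup : ∀ z : EuclideanSpace ℝ (Fin d), ‖K z‖ ≤ L_K * ‖z‖)
    (γ h : ℝ)
    (z w : ℝ → EuclideanSpace ℝ (Fin d))
    (hz : ∀ s ∈ Set.Icc (0 : ℝ) h, HasDerivAt z (w s) s)
    (hw : ∀ s ∈ Set.Icc (0 : ℝ) h, HasDerivAt w (-γ • w s - K (z s)) s)
    (t : ℝ) (ht : t ∈ Set.Icc (0 : ℝ) h) :
    (∫ s in (0:ℝ)..t, ((1 / 2) * (‖w t‖ ^ 2 + ‖w 0‖ ^ 2) - ‖w s‖ ^ 2)) ≤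
      (h ^ 2 / 2) *
        ∫ r in (0:ℝ)..t,
          (7 * γ ^ 2 * ‖w r‖ ^ 2 + (11 / 2) * L_K * ⟪z r, K (z r)⟫_ℝ
            + 2 * L_K * ‖w r‖ ^ 2) := by
  obtain ⟨ht0, hth⟩ := ht
  have hK : K.IsPositive := ⟨hKsym, fun x => by simpa [real_inner_comm] using hKpsd x⟩
  have hsub : uIcc 0 t ⊆ Icc 0 h := by rw [uIcc_of_le ht0]; exact Icc_subset_Icc_right hth
  have hKc : Continuous K := K.continuous_of_finiteDimensional
  have hzc : ContinuousOn z (uIcc 0 t) := fun s hs =>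
    (hz s (hsub hs)).continuousAt.continuousWithinAt
  have hwc : ContinuousOn w (uIcc 0 t) := fun s hs =>
    (hw s (hsub hs)).continuousAt.continuousWithinAt
  have hbound_nonneg : ∀ r, 0 ≤ 7 * γ ^ 2 * ‖w r‖ ^ 2 + (11 / 2) * L_K * ⟪z r, K (z r)⟫_ℝ
      + 2 * L_K * ‖w r‖ ^ 2 := fun r => by
    have := hKpsd (z r)
    positivity
  calc _ = ∫ s in (0:ℝ)..t, ((‖w 0‖ ^ 2 + ‖w t‖ ^ 2) / 2 - ‖w s‖ ^ 2) := by
        congr 1; ext s; ring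
    _ ≤ (t - 0) ^ 2 / 8 * ∫ r in (0:ℝ)..t, (7 * γ ^ 2 * ‖w r‖ ^ 2
          + (11 / 2) * L_K * ⟪z r, K (z r)⟫_ℝ + 2 * L_K * ‖w r‖ ^ 2) :=
      integral_trapezoid_defect_le ht0
        (fun s hs => hasDerivAt_norm_sq_velocity K γ (hw s (hsub hs)))
        (fun s hs => hasDerivAt_deriv_norm_sq_velocity K γ (hz s (hsub hs)) (hw s (hsub hs)))
        (ContinuousOn.intervalIntegrable (by fun_prop))
        (ContinuousOn.intervalIntegrable (by fun_prop))
        (fun s _ => hK.second_deriv_norm_sq_velocity_le hLK.le hKup γ (z s) (w s))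
        (fun r _ => hbound_nonneg r)
    _ ≤ h ^ 2 / 2 * _ := mul_le_mul_of_nonneg_right (by nlinarith)
        (intervalIntegral.integral_nonneg ht0 fun r _ => hbound_nonneg r)

/-- the trapezoidal defect bound along the deterministic flow
`z′ = w`, `w′ = −γw − Kz`: for every `t ∈ [0,h]`,
`∫₀ᵗ ((1/2)(‖w_t‖² + ‖w_0‖²) − ‖w_s‖²) ds
  ≤ (h²/2) ∫₀ᵗ (7γ²‖w_r‖² + (11/2)L_K⟪z_r,Kz_r⟫ + 2L_K‖w_r‖²) dr`. -/
theorem trapezoidal_defect_bound (d : ℕ)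
    (K : EuclideanSpace ℝ (Fin d) →ₗ[ℝ] EuclideanSpace ℝ (Fin d))
    (hKsym : ∀ z w : EuclideanSpace ℝ (Fin d), ⟪K z, w⟫_ℝ = ⟪z, K w⟫_ℝ)
    (hKpsd : ∀ z : EuclideanSpace ℝ (Fin d), 0 ≤ ⟪z, K z⟫_ℝ)
    (L_K : ℝ) (hLK : 0 < L_K)
    (hKup : ∀ z : EuclideanSpace ℝ (Fin d), ‖K z‖ ≤ L_K * ‖z‖)
    (γ h : ℝ) (hγ : 0 < γ) (hh : 0 < h)
    (z w : ℝ → EuclideanSpace ℝ (Fin d))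
    (hz : ∀ s ∈ Set.Icc (0 : ℝ) h, HasDerivAt z (w s) s)
    (hw : ∀ s ∈ Set.Icc (0 : ℝ) h, HasDerivAt w (-γ • w s - K (z s)) s)
    (t : ℝ) (ht : t ∈ Set.Icc (0 : ℝ) h) :
    (∫ s in (0:ℝ)..t, ((1 / 2) * (‖w t‖ ^ 2 + ‖w 0‖ ^ 2) - ‖w s‖ ^ 2)) ≤
      (h ^ 2 / 2) *
        ∫ r in (0:ℝ)..t,
          (7 * γ ^ 2 * ‖w r‖ ^ 2 + (11 / 2) * L_K * ⟪z r, K (z r)⟫_ℝ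
            + 2 * L_K * ‖w r‖ ^ 2) :=
  trapezoidal_defect_bound_general d K hKsym hKpsd L_K hLK hKup γ h z w hz hw t ht
end
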